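/- For every integer k ≥ 5, let F_k be the graph with vertex set {z} ∪ {x_1,…,x_k} ∪ {y_1,…,y_{2k}} and edges z x_i (i ∈ [k]), x_i y_{2i−1}, x_i y_{2i} (i ∈ [k]), and y_j y_{j+1} (j ∈ [2k−1]). Then μ_t(F_k − z) = μ_d(F_k − z) = μ_o(F_k − z) = μ(F_k − z) = k + 2. -/

import Mathlib

/-!
The vertices `x_i` and the two ends of the path `y_1 ⋯ y_{2k}` are simplicial (their
neighbourhoods are cliques), and a simplicial vertex is never interior to a shortest path,
since its two neighbours on the path would give a shortcut. So these `k + 2` vertices form a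
total mutual-visibility set. Conversely, if `y_a, y_b, y_c` with `a < b < c` lay in a
mutual-visibility set, a shortest `y_a,y_c`-path would have to avoid `y_b`; a potential that
grows along the `y`'s shows that such a path is longer than the route along the `y`'s. Hence
such a set contains at most two `y`'s, so at most `k + 2` vertices, and `μ_t ≤ μ_d, μ_o ≤ μ`
gives all four equalities.
-/

open SimpleGraph

/-- `u` and `v` are `X`-visible in `G`: there is a shortest `u,v`-walk whose
vertices meet `X` only possibly in `u` and `v`. -/
def IsMVisible {V : Type*} (G : SimpleGraph V) (X : Set V) (u v : V) : Prop :=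
  ∃ P : G.Walk u v, P.length = G.dist u v ∧
    ∀ w ∈ P.support, w ∈ X → w = u ∨ w = v

/-- mutual-visibility set -/
def IsMVSet {V : Type*} (G : SimpleGraph V) (X : Set V) : Prop :=
  ∀ u ∈ X, ∀ v ∈ X, IsMVisible G X u v

/-- outer mutual-visibility set -/
def IsOuterMVSet {V : Type*} (G : SimpleGraph V) (X : Set V) : Prop :=
  ∀ u ∈ X, ∀ v : V, IsMVisible G X u v

/-- dual mutual-visibility set -/
def IsDualMVSet {V : Type*} (G : SimpleGraph V) (X : Set V) : Prop :=
  (∀ u ∈ X, ∀ v ∈ X, IsMVisible G X u v) ∧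
  (∀ u ∉ X, ∀ v ∉ X, IsMVisible G X u v)

/-- total mutual-visibility set -/
def IsTotalMVSet {V : Type*} (G : SimpleGraph V) (X : Set V) : Prop :=
  ∀ u v : V, IsMVisible G X u v

/-- the mutual-visibility number μ(G) -/
noncomputable def mu {V : Type*} (G : SimpleGraph V) : ℕ :=
  sSup {n | ∃ X : Set V, IsMVSet G X ∧ X.ncard = n}

/-- the outer mutual-visibility number μₒ(G) -/
noncomputable def muO {V : Type*} (G : SimpleGraph V) : ℕ :=
  sSup {n | ∃ X : Set V, IsOuterMVSet G X ∧ X.ncard = n}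

/-- the dual mutual-visibility number μ_d(G) -/
noncomputable def muD {V : Type*} (G : SimpleGraph V) : ℕ :=
  sSup {n | ∃ X : Set V, IsDualMVSet G X ∧ X.ncard = n}

/-- the total mutual-visibility number μ_t(G) -/
noncomputable def muT {V : Type*} (G : SimpleGraph V) : ℕ :=
  sSup {n | ∃ X : Set V, IsTotalMVSet G X ∧ X.ncard = n}

/-- relation underlying the graph `F_k`; with `z = none`,
`x i = some (Sum.inl i)` (i ∈ [k], 0-indexed) and `y j = some (Sum.inr j)`
(j ∈ [2k], 0-indexed), the edges are exactly `z x_i`, `x_i y_{2i}`, `x_i y_{2i+1}`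
and `y_j y_{j+1}`. -/
def Frel (k : ℕ) : Option (Fin k ⊕ Fin (2 * k)) → Option (Fin k ⊕ Fin (2 * k)) → Prop
  | none, some (Sum.inl _) => True
  | some (Sum.inl i), some (Sum.inr j) => (j : ℕ) = 2 * (i : ℕ) ∨ (j : ℕ) = 2 * (i : ℕ) + 1
  | some (Sum.inr j), some (Sum.inr j') => (j' : ℕ) = (j : ℕ) + 1
  | _, _ => False

/-- the graph `F_k` from the paper -/
def Fgraph (k : ℕ) : SimpleGraph (Option (Fin k ⊕ Fin (2 * k))) := SimpleGraph.fromRel (Frel k)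


namespace SimpleGraph

variable {V : Type*} {G : SimpleGraph V}

theorem Walk.abs_sub_le_mul_length {f : V → ℤ} {C : ℤ} :
    ∀ {u v : V} (p : G.Walk u v), (∀ d ∈ p.darts, |f d.fst - f d.snd| ≤ C) →
      |f u - f v| ≤ C * p.length
  | _, _, .nil, _ => by simp
  | u, v, .cons (v := w) h p, hf => by
    have hstep : |f u - f w| ≤ C := hf ⟨(u, w), h⟩ (by simp)
    have hrest := p.abs_sub_le_mul_length fun d hd ↦ hf d (by simp [hd])
    calc |f u - f v| ≤ |f u - f w| + |f w - f v| := abs_sub_le _ _ _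
      _ ≤ C * (p.cons h).length := by rw [Walk.length_cons]; push_cast; linarith

theorem Walk.eq_or_eq_of_isClique_neighborSet {u v w : V} (p : G.Walk u v)
    (hp : p.length = G.dist u v) (hw : w ∈ p.support) (hcl : G.IsClique (G.neighborSet w)) :
    w = u ∨ w = v := by
  by_contra! hne
  obtain ⟨q, r, rfl⟩ := Walk.mem_support_iff_exists_append.mp hw
  obtain ⟨a, hwa, q', hq'⟩ := Walk.exists_eq_cons_of_ne hne.1 q.reverse
  obtain ⟨b, hwb, r', rfl⟩ := Walk.exists_eq_cons_of_ne hne.2 r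
  have hq : q.length = q'.length + 1 := by
    rw [← Walk.length_reverse, hq', Walk.length_cons]
  obtain ⟨s, hs⟩ : ∃ s : G.Walk a b, s.length ≤ 1 := by
    by_cases hab : a = b
    · subst hab; exact ⟨.nil, by simp⟩
    · exact ⟨.cons (hcl hwa hwb hab) .nil, by simp⟩
  have := G.dist_le (q'.reverse.append (s.append r'))
  simp only [Walk.length_append, Walk.length_reverse, Walk.length_cons] at this hp
  omega

end SimpleGraph

section Visibility

variable {V : Type*} {G : SimpleGraph V} {X : Set V}

theorem isTotalMVSet_of_forall_isClique_neighborSet (hG : G.Connected) {X : Set V}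
    (hX : ∀ w ∈ X, G.IsClique (G.neighborSet w)) : IsTotalMVSet G X := by
  intro u v
  obtain ⟨p, hp⟩ := hG.exists_walk_length_eq_dist u v
  exact ⟨p, hp, fun w hw hwX ↦ p.eq_or_eq_of_isClique_neighborSet hp hw (hX w hwX)⟩

theorem IsTotalMVSet.isMVSet (h : IsTotalMVSet G X) : IsMVSet G X :=
  fun u _ v _ ↦ h u v

theorem IsTotalMVSet.isOuterMVSet (h : IsTotalMVSet G X) : IsOuterMVSet G X :=
  fun u _ v ↦ h u v

theorem IsTotalMVSet.isDualMVSet (h : IsTotalMVSet G X) : IsDualMVSet G X :=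
  ⟨fun u _ v _ ↦ h u v, fun u _ v _ ↦ h u v⟩

theorem IsOuterMVSet.isMVSet (h : IsOuterMVSet G X) : IsMVSet G X :=
  fun u hu v _ ↦ h u hu v

theorem IsDualMVSet.isMVSet (h : IsDualMVSet G X) : IsMVSet G X :=
  h.1

theorem sSup_ncard_eq_of_le {P : Set V → Prop} (hX : P X) (hle : ∀ Y, P Y → Y.ncard ≤ X.ncard) :
    sSup {n | ∃ Y, P Y ∧ Y.ncard = n} = X.ncard := by
  have hbdd : ∀ n ∈ {n | ∃ Y, P Y ∧ Y.ncard = n}, n ≤ X.ncard := by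
    rintro n ⟨Y, hY, rfl⟩
    exact hle Y hY
  exact le_antisymm (csSup_le ⟨_, X, hX, rfl⟩ hbdd) (le_csSup ⟨_, hbdd⟩ ⟨X, hX, rfl⟩)

theorem visibility_numbers_eq_ncard (hX : IsTotalMVSet G X)
    (hle : ∀ Y, IsMVSet G Y → Y.ncard ≤ X.ncard) :
    muT G = X.ncard ∧ muD G = X.ncard ∧ muO G = X.ncard ∧ mu G = X.ncard :=
  ⟨sSup_ncard_eq_of_le hX fun Y hY ↦ hle Y hY.isMVSet,
    sSup_ncard_eq_of_le hX.isDualMVSet fun Y hY ↦ hle Y hY.isMVSet,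
    sSup_ncard_eq_of_le hX.isOuterMVSet fun Y hY ↦ hle Y hY.isMVSet,
    sSup_ncard_eq_of_le hX.isMVSet hle⟩

end Visibility

theorem Set.ncard_le_two_of_forall_not_lt_lt {α : Type*} [LinearOrder α] {s : Set α}
    (hs : s.Finite) (h : ∀ a ∈ s, ∀ b ∈ s, ∀ c ∈ s, a < b → ¬b < c) : s.ncard ≤ 2 := by
  rcases s.eq_empty_or_nonempty with rfl | hne
  · simp
  obtain ⟨a, ha, hmin⟩ := Set.exists_min_image s id hs hne
  obtain ⟨c, hc, hmax⟩ := Set.exists_max_image s id hs hne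
  have hsub : s ⊆ {a, c} := by
    intro b hb
    by_contra hbac
    simp only [Set.mem_insert_iff, Set.mem_singleton_iff, not_or] at hbac
    exact h a ha b hb c hc (lt_of_le_of_ne (hmin b hb) (Ne.symm hbac.1))
      (lt_of_le_of_ne (hmax b hb) hbac.2)
  calc s.ncard ≤ ({a, c} : Set α).ncard := Set.ncard_le_ncard hsub
    _ ≤ 2 := (Set.ncard_insert_le a {c}).trans (by simp)

namespace Fgraph

variable {k : ℕ}

abbrev deleteZVerts (k : ℕ) : Set (Option (Fin k ⊕ Fin (2 * k))) := {v | v ≠ none}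

def deleteZ (k : ℕ) : SimpleGraph (deleteZVerts k) := (Fgraph k).induce (deleteZVerts k)

def x (i : Fin k) : deleteZVerts k :=
  ⟨some (.inl i), Option.some_ne_none _⟩

def y (j : Fin (2 * k)) : deleteZVerts k :=
  ⟨some (.inr j), Option.some_ne_none _⟩

theorem x_or_y (v : deleteZVerts k) :
    (∃ i, v = x i) ∨ ∃ j, v = y j := by
  obtain ⟨_ | i | j, hv⟩ := v
  · exact absurd rfl hv
  · exact .inl ⟨i, rfl⟩
  · exact .inr ⟨j, rfl⟩

theorem x_injective : Function.Injective (x (k := k)) := by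
  intro i i' h
  simpa [x] using h

@[simp] theorem x_inj {i i' : Fin k} : x i = x i' ↔ i = i' := x_injective.eq_iff

@[simp] theorem y_inj {j j' : Fin (2 * k)} : y j = y j' ↔ j = j' := by
  simp [y]

@[simp] theorem x_ne_y (i : Fin k) (j : Fin (2 * k)) : x i ≠ y j := by
  simp [x, y]

@[simp] theorem not_adj_x_x (i i' : Fin k) : ¬(deleteZ k).Adj (x i) (x i') := by
  simp [deleteZ, x, Fgraph, Frel]

@[simp] theorem adj_x_y {i : Fin k} {j : Fin (2 * k)} :
    (deleteZ k).Adj (x i) (y j) ↔ (j : ℕ) = 2 * i ∨ (j : ℕ) = 2 * i + 1 := by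
  simp [deleteZ, x, y, Fgraph, Frel]

@[simp] theorem adj_y_x {i : Fin k} {j : Fin (2 * k)} :
    (deleteZ k).Adj (y j) (x i) ↔ (j : ℕ) = 2 * i ∨ (j : ℕ) = 2 * i + 1 := by
  rw [adj_comm, adj_x_y]

@[simp] theorem adj_y_y {j j' : Fin (2 * k)} :
    (deleteZ k).Adj (y j) (y j') ↔ (j' : ℕ) = j + 1 ∨ (j : ℕ) = j' + 1 := by
  simp only [deleteZ, y, Fgraph, comap_adj, Function.Embedding.coe_subtype,
    fromRel_adj, ne_eq, Option.some.injEq, Sum.inr.injEq, Frel]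
  omega

theorem exists_walk_y_length :
    ∀ (n : ℕ) (a c : Fin (2 * k)), (c : ℕ) = a + n →
      ∃ p : (deleteZ k).Walk (y a) (y c), p.length = n
  | 0, a, c, h => by
    obtain rfl : a = c := Fin.ext (by omega)
    exact ⟨.nil, rfl⟩
  | n + 1, a, c, h => by
    obtain ⟨p, hp⟩ := exists_walk_y_length n ⟨a + 1, by omega⟩ c (by simp only; omega)
    exact ⟨.cons (adj_y_y.mpr (.inl rfl)) p, by simp [hp]⟩

theorem dist_y_le {a c : Fin (2 * k)} (h : a ≤ c) :
    (deleteZ k).dist (y a) (y c) ≤ (c : ℕ) - a := by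
  obtain ⟨p, hp⟩ := exists_walk_y_length (c - a) a c (by rw [Fin.le_def] at h; omega)
  exact hp ▸ dist_le p

theorem connected (hk : 0 < k) : (deleteZ k).Connected := by
  have hy : ∀ j, (deleteZ k).Reachable (y ⟨0, by omega⟩) (y j) := fun j ↦
    (exists_walk_y_length j _ j (zero_add _).symm).elim fun p _ ↦ ⟨p⟩
  have hreach : ∀ v, (deleteZ k).Reachable (y ⟨0, by omega⟩) v := by
    intro v
    obtain ⟨i, rfl⟩ | ⟨j, rfl⟩ := x_or_y v
    · exact (hy ⟨2 * i, by omega⟩).trans (adj_y_x.mpr (.inl rfl)).reachable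
    · exact hy j
  exact (connected_iff_exists_forall_reachable _).mpr ⟨_, hreach⟩

theorem isClique_neighborSet_x (i : Fin k) :
    (deleteZ k).IsClique ((deleteZ k).neighborSet (x i)) := by
  rintro a ha b hb hab
  obtain ⟨_, rfl⟩ | ⟨ja, rfl⟩ := x_or_y a <;> obtain ⟨_, rfl⟩ | ⟨jb, rfl⟩ := x_or_y b <;>
    simp_all [Fin.ext_iff]
  omega

theorem isClique_neighborSet_y {j : Fin (2 * k)} (hj : (j : ℕ) = 0 ∨ (j : ℕ) = 2 * k - 1) :
    (deleteZ k).IsClique ((deleteZ k).neighborSet (y j)) := by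
  rintro a ha b hb hab
  obtain ⟨_, rfl⟩ | ⟨ja, rfl⟩ := x_or_y a <;> obtain ⟨_, rfl⟩ | ⟨jb, rfl⟩ := x_or_y b <;>
    simp_all [Fin.ext_iff] <;> omega

-- On `y j` the potential is `2 j`, plus 2 beyond `y b`; no edge avoiding `y b` changes it by more
-- than 2, so a walk from `y a` to `y c` avoiding `y b` has length at least `c - a + 1`.
def potential (b : ℕ) : deleteZVerts k → ℤ
  | ⟨some (.inl i), _⟩ => 4 * i + 1 + if b ≤ 2 * i then 2 else 0
  | ⟨some (.inr j), _⟩ => 2 * j + if b < j then 2 else 0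
  | ⟨none, _⟩ => 0

@[simp] theorem potential_x (b : ℕ) (i : Fin k) :
    potential b (x i) = 4 * i + 1 + if b ≤ 2 * i then 2 else 0 := rfl

@[simp] theorem potential_y (b : ℕ) (j : Fin (2 * k)) :
    potential b (y j) = 2 * j + if b < j then 2 else 0 := rfl

theorem abs_potential_sub_le {b : Fin (2 * k)} {u v} (huv : (deleteZ k).Adj u v)
    (hu : u ≠ y b) (hv : v ≠ y b) : |potential b u - potential b v| ≤ 2 := by
  obtain ⟨_, rfl⟩ | ⟨_, rfl⟩ := x_or_y u <;> obtain ⟨_, rfl⟩ | ⟨_, rfl⟩ := x_or_y v <;>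
    simp_all [Fin.ext_iff, abs_le] <;> split_ifs <;> omega

theorem lt_length_of_y_notMem_support {a b c : Fin (2 * k)} (hab : a < b) (hbc : b < c)
    (p : (deleteZ k).Walk (y a) (y c)) (hp : y b ∉ p.support) : (c : ℕ) - a < p.length := by
  have hdarts : ∀ d ∈ p.darts, |potential b d.fst - potential b d.snd| ≤ 2 := fun d hd ↦
    abs_potential_sub_le d.adj
      (ne_of_mem_of_not_mem (p.dart_fst_mem_support_of_mem_darts hd) hp)
      (ne_of_mem_of_not_mem (p.dart_snd_mem_support_of_mem_darts hd) hp)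
  have := p.abs_sub_le_mul_length hdarts
  rw [Fin.lt_def] at hab hbc
  simp only [potential_y, if_neg (show ¬(b : ℕ) < a by omega), if_pos hbc, abs_le] at this
  omega

theorem not_isMVisible_y {X : Set (deleteZVerts k)}
    {a b c : Fin (2 * k)} (hab : a < b) (hbc : b < c) (hb : y b ∈ X) :
    ¬IsMVisible (deleteZ k) X (y a) (y c) := by
  rintro ⟨p, hp, hX⟩
  have hnotMem : y b ∉ p.support := fun hmem ↦ by
    rcases hX _ hmem hb with h | h <;> simp_all
  have := lt_length_of_y_notMem_support hab hbc p hnotMem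
  have := dist_y_le (hab.trans hbc).le
  omega

theorem ncard_le_of_isMVSet {X : Set (deleteZVerts k)}
    (hX : IsMVSet (deleteZ k) X) : X.ncard ≤ k + 2 := by
  set T : Set (Fin (2 * k)) := {j | y j ∈ X}
  have hT : T.ncard ≤ 2 := Set.ncard_le_two_of_forall_not_lt_lt T.toFinite
    fun a ha b hb c hc hab hbc ↦ not_isMVisible_y hab hbc hb (hX _ ha _ hc)
  have hsub : X ⊆ Set.range x ∪ y '' T := by
    intro v hv
    obtain ⟨i, rfl⟩ | ⟨j, rfl⟩ := x_or_y v
    · exact .inl ⟨i, rfl⟩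
    · exact .inr ⟨j, hv, rfl⟩
  calc X.ncard ≤ (Set.range x ∪ y '' T).ncard := Set.ncard_le_ncard hsub
    _ ≤ (Set.range x).ncard + (y '' T).ncard := Set.ncard_union_le _ _
    _ ≤ k + 2 := by
      rw [Set.ncard_range_of_injective x_injective, Nat.card_eq_fintype_card, Fintype.card_fin]
      have := Set.ncard_image_le (f := y) T.toFinite
      omega

def simplicialSet (hk : 0 < k) : Set (deleteZVerts k) :=
  Set.range x ∪ {y ⟨0, by omega⟩, y ⟨2 * k - 1, by omega⟩}

theorem isTotalMVSet_simplicialSet (hk : 0 < k) :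
    IsTotalMVSet (deleteZ k) (simplicialSet hk) := by
  refine isTotalMVSet_of_forall_isClique_neighborSet (connected hk) ?_
  rintro w (⟨i, rfl⟩ | rfl | rfl)
  · exact isClique_neighborSet_x i
  · exact isClique_neighborSet_y (.inl rfl)
  · exact isClique_neighborSet_y (.inr rfl)

theorem ncard_simplicialSet (hk : 0 < k) : (simplicialSet hk).ncard = k + 2 := by
  rw [simplicialSet, Set.ncard_union_eq, Set.ncard_range_of_injective x_injective,
    Nat.card_eq_fintype_card, Fintype.card_fin, Set.ncard_pair]
  · simp only [ne_eq, y_inj, Fin.mk.injEq]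
    omega
  · simp [Set.disjoint_right]

end Fgraph

theorem stmt_19 (k : ℕ) (hk : 5 ≤ k) :
    muT ((Fgraph k).induce {v | v ≠ none}) = k + 2 ∧
    muD ((Fgraph k).induce {v | v ≠ none}) = k + 2 ∧
    muO ((Fgraph k).induce {v | v ≠ none}) = k + 2 ∧
    mu ((Fgraph k).induce {v | v ≠ none}) = k + 2 := by
  have hpos : 0 < k := by omega
  rw [← Fgraph.ncard_simplicialSet hpos]
  exact visibility_numbers_eq_ncard (Fgraph.isTotalMVSet_simplicialSet hpos) fun X hX ↦
    (Fgraph.ncard_le_of_isMVSet hX).trans (Fgraph.ncard_simplicialSet hpos).ge
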